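/- Let E be a Banach space and D, C : E → E bounded linear operators on suitable spaces with C ∘ D = 0. Suppose: (a) (one-step raising) there are Banach spaces E_r ⊇ E_{s_0} ⊇ E_s (with continuous inclusions) and for every ω ∈ E_r with C ω = 0 there exist v and ω₁ ∈ E_{s_0} with D v = ω + ω₁, ‖v‖ ≤ G‖ω‖, ‖ω₁‖_{E_{s_0}} ≤ G‖ω‖_{E_r}, and C ω₁ = 0; (b) (global threshold) for every ω̃ ∈ E_s with C ω̃ = 0 there exists w ∈ E_s with D w = ω̃ and ‖w‖ ≤ c_g ‖ω̃‖. Then, if the one-step raising can be iterated k times so that after k steps the output lies in E_s, every ω ∈ E_r with C ω = 0 admits a solution u of D u = ω with ‖u‖ controlled by a constant times ‖ω‖_{E_r}. -/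
import Mathlib


/-- Abstract raising steps theorem with global threshold: given a chain of subspaces
`F 0 ⊇ F 1 ⊇ … ⊇ F k` of a Banach space, a one-step raising property (a) producing an
error of one level higher along the chain, a compatibility operator `C` with
`C ∘ D = 0`, and a global solution operator (b) at the top level `F k`, every
`ω ∈ F 0` with `C ω = 0` admits a solution `u` of `D u = ω` with norm controlled by a
constant times `‖ω‖`. -/
theorem stmt_11 {E : Type*} [NormedAddCommGroup E] [NormedSpace ℝ E] [CompleteSpace E]
    (D C : E →L[ℝ] E) (hCD : ∀ x : E, C (D x) = 0)
    (k : ℕ) (F : ℕ → Submodule ℝ E) (hchain : ∀ j, F (j + 1) ≤ F j)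
    (G : ℝ)
    (hstep : ∀ j < k, ∀ ω ∈ F j, C ω = 0 →
      ∃ v : E, ∃ ω₁ ∈ F (j + 1), D v = ω + ω₁ ∧
        ‖v‖ ≤ G * ‖ω‖ ∧ ‖ω₁‖ ≤ G * ‖ω‖ ∧ C ω₁ = 0)
    (cg : ℝ)
    (hglobal : ∀ ω' ∈ F k, C ω' = 0 →
      ∃ w ∈ F k, D w = ω' ∧ ‖w‖ ≤ cg * ‖ω'‖) :
    ∃ c : ℝ, ∀ ω ∈ F 0, C ω = 0 → ∃ u : E, D u = ω ∧ ‖u‖ ≤ c * ‖ω‖ := by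
  have key : ∀ j, j ≤ k → ∃ c : ℝ, 0 ≤ c ∧ ∀ ω ∈ F (k - j), C ω = 0 →
      ∃ u : E, D u = ω ∧ ‖u‖ ≤ c * ‖ω‖ := by
    intro j
    induction j with
    | zero =>
      intro _
      refine ⟨max cg 0, le_max_right _ _, ?_⟩
      simp only [Nat.sub_zero]
      intro ω hω hCω
      obtain ⟨w, _, hDw, hnw⟩ := hglobal ω hω hCω
      exact ⟨w, hDw, hnw.trans (by
        have := norm_nonneg ω
        nlinarith [le_max_left cg (0:ℝ)])⟩
    | succ j ih =>
      intro hjk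
      obtain ⟨c, hc0, hc⟩ := ih (Nat.le_of_succ_le hjk)
      refine ⟨max G 0 + c * max G 0, by positivity, ?_⟩
      intro ω hω hCω
      have hlt : k - (j + 1) < k := by omega
      obtain ⟨v, ω₁, hω₁, hDv, hnv, hnω₁, hCω₁⟩ := hstep _ hlt ω hω hCω
      have heq : k - (j + 1) + 1 = k - j := by omega
      rw [heq] at hω₁
      obtain ⟨u₁, hDu₁, hnu₁⟩ := hc ω₁ hω₁ hCω₁
      refine ⟨v - u₁, ?_, ?_⟩
      · rw [map_sub, hDv, hDu₁]; abel
      · calc ‖v - u₁‖ ≤ ‖v‖ + ‖u₁‖ := norm_sub_le _ _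
          _ ≤ G * ‖ω‖ + c * (G * ‖ω‖) := by
              refine add_le_add hnv (hnu₁.trans ?_)
              exact mul_le_mul_of_nonneg_left hnω₁ hc0
          _ ≤ (max G 0 + c * max G 0) * ‖ω‖ := by
              have h1 : G * ‖ω‖ ≤ max G 0 * ‖ω‖ :=
                mul_le_mul_of_nonneg_right (le_max_left _ _) (norm_nonneg ω)
              have h2 : c * (G * ‖ω‖) ≤ c * (max G 0 * ‖ω‖) :=
                mul_le_mul_of_nonneg_left h1 hc0
              rw [add_mul, mul_assoc]
              exact add_le_add h1 h2
  obtain ⟨c, _, hc⟩ := key k le_rfl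
  exact ⟨c, by simpa using hc⟩
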